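/- Let f, g : ℝ^N → ℝ be quasiconvex functions such that f = g almost everywhere with respect to Lebesgue measure. Suppose that the pointwise infimum of f over ℝ^N equals its essential infimum over ℝ^N, and likewise the pointwise infimum of g over ℝ^N equals its essential infimum over ℝ^N. Then for every x ∈ ℝ^N, f is approximately continuous at x if and only if g is approximately continuous at x, and at any such common point of approximate continuity f(x) = g(x). -/

import Mathlib

/-
If `f` is approximately continuous at `x`, then `g x = f x`. Were `g x < f x`, the sublevel set
`C = {g < f x - ε}` would be a convex set containing `x`; it is not null since `inf g = essInf g`,
so scaling about `x` gives it a positive lower density at `x`. But `C` is a.e. disjoint from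
`{|f - f x| < ε}`, which has density `1` at `x`. Were `f x < g x`, the set `{|f - f x| < ε}` would
lie a.e. in the convex set `{g < f x + ε}`, which misses `x`; separating `x` from its interior
puts it, up to its null frontier, in a half-space through `x`, so its density is at most `1/2`.
Once `f x = g x`, approximate continuity passes from `f` to `g` along the a.e. equality.
-/

open MeasureTheory Metric Filter

/-- `f` is approximately continuous at `x` if for every `ε > 0` the set
`{y | |f y - f x| < ε}` has Lebesgue density `1` at `x`. -/
def ApproxContinuousAt {N : ℕ} (f : EuclideanSpace ℝ (Fin N) → ℝ)
    (x : EuclideanSpace ℝ (Fin N)) : Prop :=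
  ∀ ε : ℝ, 0 < ε →
    Tendsto (fun r : ℝ => volume ({y | |f y - f x| < ε} ∩ ball x r) / volume (ball x r))
      (nhdsWithin 0 (Set.Ioi 0)) (nhds 1)

open Set Module Topology
open scoped ENNReal

theorem AEDisjoint.measure_inter_div_add_measure_inter_div_le_one {α : Type*}
    [MeasurableSpace α] {μ : Measure α} {s t b : Set α} (hst : AEDisjoint μ s t)
    (ht : NullMeasurableSet t μ) (hb : MeasurableSet b) :
    μ (s ∩ b) / μ b + μ (t ∩ b) / μ b ≤ 1 := by
  rw [ENNReal.div_add_div_same, ← measure_union₀ (ht.inter hb.nullMeasurableSet)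
    (hst.mono inter_subset_left inter_subset_left)]
  exact ENNReal.div_le_of_le_mul (by
    rw [one_mul]; exact measure_mono (union_subset inter_subset_right inter_subset_right))

theorem measure_setOf_lt_ne_zero_of_iInf_eq_essInf {α : Type*} [MeasurableSpace α]
    {μ : Measure α} {g : α → ℝ} (hgi : ⨅ x, (g x : EReal) = essInf (fun x => (g x : EReal)) μ)
    {x : α} {a : ℝ} (hx : g x < a) : μ {y | g y < a} ≠ 0 := by
  intro h0
  have hae : ∀ᵐ y ∂μ, (a : EReal) ≤ g y := by
    rw [ae_iff]
    simpa only [EReal.coe_le_coe_iff, not_le] using h0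
  have : (a : EReal) ≤ g x := (hgi ▸ le_essInf_of_ae_le _ hae).trans (iInf_le _ x)
  exact hx.not_ge (EReal.coe_le_coe_iff.1 this)

section AddHaar

variable {E : Type*} [NormedAddCommGroup E] [NormedSpace ℝ E] [MeasurableSpace E] [BorelSpace E]
  [FiniteDimensional ℝ E] (μ : Measure E) [μ.IsAddHaarMeasure] {s : Set E} {x : E}

theorem two_mul_measure_halfspace_inter_ball_le (ℓ : E →L[ℝ] ℝ) (r : ℝ) :
    2 * μ ({y | ℓ y < ℓ x} ∩ ball x r) ≤ μ (ball x r) := by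
  set A := {y | ℓ y < ℓ x} ∩ ball x r
  set A' := {y | ℓ x < ℓ y} ∩ ball x r
  have hreflect : (fun y => (x + x) - y) ⁻¹' A = A' := by
    ext y
    simp only [A, A', mem_preimage, mem_inter_iff, mem_ofPred_eq, mem_ball, map_sub, map_add,
      dist_eq_norm, show x + x - y - x = -(y - x) by abel, norm_neg]
    constructor <;> rintro ⟨h, hy⟩ <;> exact ⟨by linarith, hy⟩
  have hA' : μ A' = μ A := by
    rw [← hreflect]
    exact (Measure.measurePreserving_sub_left μ (x + x)).measure_preimage
      ((isOpen_lt ℓ.continuous continuous_const).inter isOpen_ball).nullMeasurableSet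
  have hdisj : Disjoint A A' := Disjoint.mono inter_subset_left inter_subset_left
    (disjoint_left.2 fun y (h : ℓ y < ℓ x) (h' : ℓ x < ℓ y) => lt_asymm h h')
  calc 2 * μ A = μ (A ∪ A') := by
        rw [measure_union hdisj ((isOpen_lt continuous_const ℓ.continuous).inter
          isOpen_ball).measurableSet, hA', two_mul]
    _ ≤ μ (ball x r) := measure_mono (union_subset inter_subset_right inter_subset_right)

/-- The interior of `s` lies in an open half-space through `x`, and the rest of `s` is contained
in its frontier, which is null. -/
theorem Convex.two_mul_measure_inter_ball_le (hs : Convex ℝ s) (hx : x ∉ s) (r : ℝ) :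
    2 * μ (s ∩ ball x r) ≤ μ (ball x r) := by
  obtain ⟨ℓ, hℓ⟩ := geometric_hahn_banach_open_point hs.interior isOpen_interior
    (fun h => hx (interior_subset h))
  have hsub : (s ∩ ball x r : Set E) ≤ᵐ[μ] ({y | ℓ y < ℓ x} ∩ ball x r : Set E) := by
    refine ae_le_set.2 (measure_mono_null ?_ (hs.addHaar_frontier μ))
    rintro y ⟨⟨hys, hyb⟩, hyH⟩
    exact ⟨subset_closure hys, fun hyi => hyH ⟨hℓ y hyi, hyb⟩⟩
  calc 2 * μ (s ∩ ball x r) ≤ 2 * μ ({y | ℓ y < ℓ x} ∩ ball x r) := by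
        gcongr 2 * ?_; exact measure_mono_ae hsub
    _ ≤ μ (ball x r) := two_mul_measure_halfspace_inter_ball_le μ ℓ r

/-- The homothety of ratio `r / R` about `x` maps `s ∩ ball x R` into `s ∩ ball x r` and scales
both measures by the same factor. -/
theorem StarConvex.measure_inter_ball_div_le (hs : StarConvex ℝ x s) {r R : ℝ} (hr : 0 < r)
    (hrR : r ≤ R) : μ (s ∩ ball x R) / μ (ball x R) ≤ μ (s ∩ ball x r) / μ (ball x r) := by
  have hR : 0 < R := hr.trans_le hrR
  set t := r / R
  have ht : 0 < t := div_pos hr hR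
  have hrt : r = t * R := (div_mul_cancel₀ r hR.ne').symm
  set k := ENNReal.ofReal (t ^ finrank ℝ E)
  have hk : k ≠ 0 := (ENNReal.ofReal_pos.2 (pow_pos ht _)).ne'
  have hball : μ (ball x r) = k * μ (ball x R) := by
    rw [hrt, Measure.addHaar_ball_mul_of_pos μ x ht, Measure.addHaar_ball_center μ x R]
  have himage : AffineMap.homothety x t '' (s ∩ ball x R) ⊆ s ∩ ball x r := by
    rintro _ ⟨y, ⟨hys, hyb⟩, rfl⟩
    refine ⟨?_, ?_⟩
    · rw [AffineMap.homothety_apply, vsub_eq_sub, vadd_eq_add, add_comm]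
      exact hs.add_smul_sub_mem hys ht.le ((div_le_one hR).2 hrR)
    · rw [mem_ball, dist_homothety_center, Real.norm_of_nonneg ht.le, hrt, dist_comm]
      exact mul_lt_mul_of_pos_left hyb ht
  have hinter : k * μ (s ∩ ball x R) ≤ μ (s ∩ ball x r) := by
    calc k * μ (s ∩ ball x R) = μ (AffineMap.homothety x t '' (s ∩ ball x R)) := by
          rw [Measure.addHaar_image_homothety, abs_of_pos (pow_pos ht _)]
      _ ≤ μ (s ∩ ball x r) := measure_mono himage
  calc μ (s ∩ ball x R) / μ (ball x R) = k * μ (s ∩ ball x R) / (k * μ (ball x R)) :=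
        (ENNReal.mul_div_mul_left _ _ hk ENNReal.ofReal_ne_top).symm
    _ ≤ μ (s ∩ ball x r) / μ (ball x r) := by rw [← hball]; gcongr

theorem StarConvex.exists_ne_zero_eventually_le_measure_inter_ball_div (hs : StarConvex ℝ x s)
    (h0 : μ s ≠ 0) : ∃ c ≠ 0, ∀ᶠ r in 𝓝[>] 0, c ≤ μ (s ∩ ball x r) / μ (ball x r) := by
  obtain ⟨n, hn⟩ : ∃ n : ℕ, μ (s ∩ ball x n) ≠ 0 := by
    by_contra! h
    refine h0 (measure_mono_null ?_ (measure_iUnion_null h))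
    rw [← inter_iUnion, iUnion_ball_nat, inter_univ]
  have hR : (0 : ℝ) < n :=
    nonempty_ball.1 ((nonempty_of_measure_ne_zero hn).mono inter_subset_right)
  refine ⟨μ (s ∩ ball x n) / μ (ball x n), ?_, ?_⟩
  · simp only [ne_eq, ENNReal.div_eq_zero_iff, hn, measure_ball_lt_top.ne, or_self,
      not_false_eq_true]
  · filter_upwards [Ioc_mem_nhdsGT hR] with r hr using hs.measure_inter_ball_div_le μ hr.1 hr.2

end AddHaar

section Approx

variable {N : ℕ} {f g : EuclideanSpace ℝ (Fin N) → ℝ} {x : EuclideanSpace ℝ (Fin N)}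

theorem ApproxContinuousAt.congr_ae (hf : ApproxContinuousAt f x) (hfg : f =ᵐ[volume] g)
    (hx : f x = g x) : ApproxContinuousAt g x := by
  intro ε hε
  convert hf ε hε using 3 with r
  refine measure_congr (EventuallyEq.inter ?_ EventuallyEq.rfl)
  filter_upwards [hfg] with y hy
  change (|g y - g x| < ε) = (|f y - f x| < ε)
  rw [hy, hx]

theorem ApproxContinuousAt.le_of_ae_eq (hf : ApproxContinuousAt f x)
    (hg : ∀ α : ℝ, Convex ℝ {y | g y < α}) (hfg : f =ᵐ[volume] g)
    (hgi : ⨅ y, (g y : EReal) = essInf (fun y => (g y : EReal)) volume) : f x ≤ g x := by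
  by_contra! hlt
  set ε := (f x - g x) / 2
  have hε : 0 < ε := half_pos (sub_pos.2 hlt)
  set C := {y | g y < f x - ε}
  have hxC : x ∈ C := by simp only [C, mem_ofPred_eq, ε]; linarith
  have hSC : AEDisjoint volume {y | |f y - f x| < ε} C := by
    refine measure_mono_null ?_ (ae_iff.1 hfg)
    rintro y ⟨hyS, hyC⟩ hy
    simp only [C, mem_ofPred_eq, abs_lt, hy] at hyS hyC
    linarith
  obtain ⟨c, hc, hcC⟩ :=
    ((hg _).starConvex hxC).exists_ne_zero_eventually_le_measure_inter_ball_div volume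
      (measure_setOf_lt_ne_zero_of_iInf_eq_essInf hgi hxC)
  have hsum : ∀ᶠ r in 𝓝[>] 0,
      volume ({y | |f y - f x| < ε} ∩ ball x r) / volume (ball x r) + c ≤ 1 := by
    filter_upwards [hcC] with r hr
    exact (add_le_add le_rfl hr).trans
      (AEDisjoint.measure_inter_div_add_measure_inter_div_le_one hSC
        ((hg _).nullMeasurableSet volume) measurableSet_ball)
  have h1c : 1 + c ≤ 1 + 0 := by
    simpa using le_of_tendsto ((hf ε hε).add tendsto_const_nhds) hsum
  exact hc (nonpos_iff_eq_zero.1 ((ENNReal.add_le_add_iff_left ENNReal.one_ne_top).1 h1c))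

theorem ApproxContinuousAt.ge_of_ae_eq (hf : ApproxContinuousAt f x)
    (hg : ∀ α : ℝ, Convex ℝ {y | g y < α}) (hfg : f =ᵐ[volume] g) : g x ≤ f x := by
  by_contra! hlt
  set ε := (g x - f x) / 2
  have hε : 0 < ε := half_pos (sub_pos.2 hlt)
  set D := {y | g y < f x + ε}
  have hxD : x ∉ D := by simp only [D, mem_ofPred_eq, ε, not_lt]; linarith
  have hSD : {y | |f y - f x| < ε} ≤ᵐ[volume] D := by
    filter_upwards [hfg] with y hy (hyS : |f y - f x| < ε)
    change g y < f x + ε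
    linarith [(abs_lt.1 hyS).2]
  have hhalf : ∀ r, volume ({y | |f y - f x| < ε} ∩ ball x r) / volume (ball x r) ≤ 2⁻¹ := by
    refine fun r => ENNReal.div_le_of_le_mul ?_
    rw [← ENNReal.mul_le_iff_le_inv two_ne_zero ENNReal.ofNat_ne_top]
    calc 2 * volume ({y | |f y - f x| < ε} ∩ ball x r) ≤ 2 * volume (D ∩ ball x r) := by
          gcongr 2 * ?_; exact measure_mono_ae (hSD.inter EventuallyLE.rfl)
      _ ≤ volume (ball x r) := (hg _).two_mul_measure_inter_ball_le volume hxD r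
  have : (1 : ℝ≥0∞) ≤ 2⁻¹ := le_of_tendsto (hf ε hε) (Eventually.of_forall hhalf)
  norm_num at this

theorem ApproxContinuousAt.eq_of_ae_eq (hf : ApproxContinuousAt f x)
    (hg : ∀ α : ℝ, Convex ℝ {y | g y < α}) (hfg : f =ᵐ[volume] g)
    (hgi : ⨅ y, (g y : EReal) = essInf (fun y => (g y : EReal)) volume) : f x = g x :=
  le_antisymm (hf.le_of_ae_eq hg hfg hgi) (hf.ge_of_ae_eq hg hfg)

end Approx

theorem stmt_9 {N : ℕ} (f g : EuclideanSpace ℝ (Fin N) → ℝ)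
    (hf : ∀ α : ℝ, Convex ℝ {x | f x < α}) (hg : ∀ α : ℝ, Convex ℝ {x | g x < α})
    (hfg : f =ᵐ[volume] g)
    (hfi : (⨅ x, (f x : EReal)) = essInf (fun x => (f x : EReal)) volume)
    (hgi : (⨅ x, (g x : EReal)) = essInf (fun x => (g x : EReal)) volume) :
    ∀ x : EuclideanSpace ℝ (Fin N),
      (ApproxContinuousAt f x ↔ ApproxContinuousAt g x) ∧
        (ApproxContinuousAt f x → ApproxContinuousAt g x → f x = g x) := by
  intro x
  refine ⟨⟨fun hfx => hfx.congr_ae hfg (hfx.eq_of_ae_eq hg hfg hgi),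
    fun hgx => hgx.congr_ae hfg.symm (hgx.eq_of_ae_eq hf hfg.symm hfi)⟩,
    fun hfx _ => hfx.eq_of_ae_eq hg hfg hgi⟩
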